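/- arXiv:1809.03387 — 3 statements merged into one kernel-verified Lean document; each statement's English description precedes it below -/
import Mathlib

section
/- Let q = (q_k)_{k≥1} be a summable sequence of positive reals with q̄ = Σ_k q_k, and let Λ(t) = Σ_k q_k (e^{t_k} − 1) for t ∈ ℓ^∞(ℝ). Then for every x ∈ ℓ¹(ℝ), the Legendre–Fenchel transform Λ*(x) = sup_{t ∈ ℓ^∞(ℝ)} { Σ_k t_k x_k − Λ(t) } equals I(x), where I(x) = Σ_k x_k (log(x_k/q_k) − 1) + q̄ if all x_k ≥ 0, and I(x) = +∞ if some x_k < 0 (with the convention 0·log 0 = 0). -/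
/-!
Both `Λ` and the pairing split over coordinates, and the `k`-th summand `s ↦ q (e^s - 1)` is
the cumulant generating function of a Poisson law, whose Legendre transform is
`x (log (x / q) - 1) + q` for `x ≥ 0` (Fenchel–Young, from `e^u ≥ 1 + u`). Summing the
pointwise Fenchel–Young inequality gives `Λ* ≤ I`. Conversely, finitely supported `t` equal to
the pointwise (approximate) maximisers recover every partial sum of `I(x)`, and if `x k < 0`
then `t = -r e_k` pushes the objective above `r |x k|`.
-/

open scoped ENNReal Classical

open Real

noncomputable def poissonCGF (q s : ℝ) : ℝ := q * (exp s - 1)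

noncomputable def poissonRate (q x : ℝ) : ℝ := x * (log (x / q) - 1) + q

section Pointwise

variable {q x : ℝ}

theorem mul_sub_poissonCGF_le_poissonRate (hq : 0 < q) (hx : 0 ≤ x) (s : ℝ) :
    s * x - poissonCGF q s ≤ poissonRate q x := by
  unfold poissonCGF poissonRate
  rcases hx.eq_or_lt with rfl | hx
  · nlinarith [exp_pos s]
  · set L := log (x / q)
    have hxq : exp L * q = x := by rw [exp_log (by positivity)]; field_simp
    have hqexp : q * exp s = x * exp (s - L) := by
      rw [← hxq, exp_sub]; field_simp
    nlinarith [mul_le_mul_of_nonneg_left (add_one_le_exp (s - L)) hx.le]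

theorem poissonRate_nonneg (hq : 0 < q) (hx : 0 ≤ x) : 0 ≤ poissonRate q x := by
  simpa [poissonCGF] using mul_sub_poissonCGF_le_poissonRate hq hx 0

/-- The maximiser `log (x / q)` of `s ↦ s * x - poissonCGF q s`; for `x = 0` the supremum is
only approached as `s → -∞`, and `-r` stands in for it. -/
noncomputable def approxPoissonDual (r q x : ℝ) : ℝ := if x = 0 then -r else log (x / q)

theorem poissonRate_sub_le (hq : 0 < q) (hx : 0 ≤ x) (r : ℝ) :
    poissonRate q x - q * exp (-r) ≤
      approxPoissonDual r q x * x - poissonCGF q (approxPoissonDual r q x) := by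
  unfold approxPoissonDual poissonCGF poissonRate
  split_ifs with h0
  · subst h0; simp only [zero_mul, zero_add, mul_zero, zero_sub]; linarith
  · rw [exp_log (div_pos (hx.lt_of_ne' h0) hq)]
    field_simp
    nlinarith [mul_pos hq (exp_pos (-r))]

end Pointwise

section LInfty

variable {ι : Type*}

theorem summable_mul_of_lp_infty_lp_one (t : lp (fun _ : ι => ℝ) ∞)
    (x : lp (fun _ : ι => ℝ) 1) :
    Summable fun k => t k * x k := by
  have hx : Summable fun k => ‖x k‖ := by
    simpa using (memℓp_gen_iff (p := 1) (by norm_num)).mp (lp.memℓp x)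
  refine (hx.mul_left ‖t‖).of_norm_bounded fun k => ?_
  rw [norm_mul]
  gcongr
  exact lp.norm_apply_le_norm ENNReal.top_ne_zero t k

theorem summable_poissonCGF {q : ι → ℝ} (hq : Summable q) (t : lp (fun _ : ι => ℝ) ∞) :
    Summable fun k => poissonCGF (q k) (t k) := by
  refine (hq.abs.mul_right (exp ‖t‖ + 1)).of_norm_bounded fun k => ?_
  have htk : t k ≤ ‖t‖ :=
    (le_abs_self _).trans (lp.norm_apply_le_norm ENNReal.top_ne_zero t k)
  rw [poissonCGF, norm_mul, Real.norm_eq_abs, Real.norm_eq_abs]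
  gcongr
  calc |exp (t k) - 1| ≤ |exp (t k)| + |1| := abs_sub _ _
    _ ≤ exp ‖t‖ + 1 := by rw [abs_of_pos (exp_pos _), abs_one]; gcongr

theorem ENNReal.ofReal_tsum_le_tsum_ofReal {f g : ι → ℝ} (hf : Summable f)
    (hfg : ∀ i, f i ≤ g i) (hg : ∀ i, 0 ≤ g i) :
    ENNReal.ofReal (∑' i, f i) ≤ ∑' i, ENNReal.ofReal (g i) := by
  by_cases htop : ∑' i, ENNReal.ofReal (g i) = ⊤
  · rw [htop]; exact le_top
  have hgs : Summable g := by
    simpa [ENNReal.toReal_ofReal (hg _)] using ENNReal.summable_toReal htop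
  rw [← ENNReal.ofReal_tsum_of_nonneg hg hgs]
  exact ENNReal.ofReal_le_ofReal (hf.tsum_le_tsum hfg hgs)

theorem memℓp_infty_indicator {E : Type*} [NormedAddCommGroup E] (s : Finset ι) (d : ι → E) :
    Memℓp ((s : Set ι).indicator d) ∞ :=
  (memℓp_zero (s.finite_toSet.subset Set.support_indicator_subset)).of_exponent_ge bot_le

noncomputable def poissonDualObjective (q x t : ι → ℝ) : ℝ :=
  (∑' k, t k * x k) - ∑' k, poissonCGF (q k) (t k)

theorem ofReal_poissonDualObjective_le {q : ι → ℝ} (hq : ∀ k, 0 < q k) (hqs : Summable q)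
    (x : lp (fun _ : ι => ℝ) 1) (hx : ∀ k, 0 ≤ x k) (t : lp (fun _ : ι => ℝ) ∞) :
    ENNReal.ofReal (poissonDualObjective q x t) ≤
      ∑' k, ENNReal.ofReal (poissonRate (q k) (x k)) := by
  rw [poissonDualObjective,
    ← (summable_mul_of_lp_infty_lp_one t x).tsum_sub (summable_poissonCGF hqs t)]
  exact ENNReal.ofReal_tsum_le_tsum_ofReal
    ((summable_mul_of_lp_infty_lp_one t x).sub (summable_poissonCGF hqs t))
    (fun k => mul_sub_poissonCGF_le_poissonRate (hq k) (hx k) (t k))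
    (fun k => poissonRate_nonneg (hq k) (hx k))

theorem poissonDualObjective_indicator {q x : ι → ℝ} (s : Finset ι) (d : ι → ℝ) :
    poissonDualObjective q x ((s : Set ι).indicator d) =
      ∑ k ∈ s, (d k * x k - poissonCGF (q k) (d k)) := by
  have hvanish {k} (hk : k ∉ s) : (s : Set ι).indicator d k = 0 := Set.indicator_of_notMem hk _
  rw [poissonDualObjective, tsum_eq_sum (s := s) fun k hk => by simp [hvanish hk],
    tsum_eq_sum (s := s) fun k hk => by simp [hvanish hk, poissonCGF], ← Finset.sum_sub_distrib]
  refine Finset.sum_congr rfl fun k hk => ?_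
  simp only [Set.indicator_of_mem hk]

theorem le_iSup_ofReal_poissonDualObjective {q x : ι → ℝ} (s : Finset ι) (d : ι → ℝ) :
    ENNReal.ofReal (∑ k ∈ s, (d k * x k - poissonCGF (q k) (d k))) ≤
      ⨆ t : lp (fun _ : ι => ℝ) ∞, ENNReal.ofReal (poissonDualObjective q x t) := by
  rw [← poissonDualObjective_indicator]
  exact le_iSup (fun t : lp (fun _ : ι => ℝ) ∞ => ENNReal.ofReal (poissonDualObjective q x t))
    ⟨_, memℓp_infty_indicator s d⟩

theorem sum_ofReal_poissonRate_le_iSup {q x : ι → ℝ} (hq : ∀ k, 0 < q k) (hx : ∀ k, 0 ≤ x k)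
    (s : Finset ι) :
    ∑ k ∈ s, ENNReal.ofReal (poissonRate (q k) (x k)) ≤
      ⨆ t : lp (fun _ : ι => ℝ) ∞, ENNReal.ofReal (poissonDualObjective q x t) := by
  rw [← ENNReal.ofReal_sum_of_nonneg fun k _ => poissonRate_nonneg (hq k) (hx k)]
  have hlim : Filter.Tendsto (fun r => ∑ k ∈ s, (poissonRate (q k) (x k) - q k * exp (-r)))
      Filter.atTop (nhds (∑ k ∈ s, poissonRate (q k) (x k))) := by
    simpa using tendsto_finsetSum s fun k _ =>
      (tendsto_exp_neg_atTop_nhds_zero.const_mul (q k)).const_sub (poissonRate (q k) (x k))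
  refine le_of_tendsto (ENNReal.tendsto_ofReal hlim) (Filter.Eventually.of_forall fun r => ?_)
  refine le_trans ?_
    (le_iSup_ofReal_poissonDualObjective s fun k => approxPoissonDual r (q k) (x k))
  exact ENNReal.ofReal_le_ofReal
    (Finset.sum_le_sum fun k _ => poissonRate_sub_le (hq k) (hx k) r)

theorem iSup_ofReal_poissonDualObjective_eq_top {q x : ι → ℝ} (hq : ∀ k, 0 ≤ q k) {k₀ : ι}
    (hk₀ : x k₀ < 0) :
    ⨆ t : lp (fun _ : ι => ℝ) ∞, ENNReal.ofReal (poissonDualObjective q x t) = ⊤ := by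
  refine ENNReal.eq_top_of_forall_nnreal_le fun b => ?_
  obtain ⟨r, hr⟩ := exists_nat_gt ((b : ℝ) / -x k₀)
  have hb : (b : ℝ) ≤ -r * x k₀ - poissonCGF (q k₀) (-r) := by
    have hexp : exp (-r) ≤ 1 := exp_le_one_iff.mpr (by simp)
    rw [div_lt_iff₀ (neg_pos.mpr hk₀)] at hr
    have hcgf : poissonCGF (q k₀) (-r) ≤ 0 :=
      mul_nonpos_of_nonneg_of_nonpos (hq k₀) (sub_nonpos.mpr hexp)
    linarith
  calc (b : ℝ≥0∞) = ENNReal.ofReal b := (ENNReal.ofReal_coe_nnreal).symm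
    _ ≤ _ := ENNReal.ofReal_le_ofReal (by simpa using hb)
    _ ≤ _ := le_iSup_ofReal_poissonDualObjective {k₀} fun _ => -r

end LInfty

/-- Legendre–Fenchel transform of `Λ(t) = ∑ₖ q k (e^{t k} − 1)`: for `x ∈ ℓ¹(ℝ)`,
`Λ*(x) = sup_{t ∈ ℓ^∞} { ⟨t,x⟩ − Λ(t) }` equals
`I(x) = ∑ₖ (x k (log (x k / q k) − 1) + q k)` when all `x k ≥ 0` (possibly `+∞`),
and `+∞` if some `x k < 0`.  Both sides are nonnegative and are stated in `ℝ≥0∞`. -/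
theorem stmt4 (q : ℕ → ℝ) (hq : ∀ k, 0 < q k) (hqs : Summable q)
    (x : lp (fun _ : ℕ => ℝ) 1) :
    (⨆ t : lp (fun _ : ℕ => ℝ) ∞,
        ENNReal.ofReal ((∑' k : ℕ, t k * x k) - ∑' k : ℕ, q k * (Real.exp (t k) - 1))) =
      (if ∀ k : ℕ, 0 ≤ x k then
          ∑' k : ℕ, ENNReal.ofReal (x k * (Real.log (x k / q k) - 1) + q k)
        else ⊤) := by
  change (⨆ t : lp (fun _ : ℕ => ℝ) ∞, ENNReal.ofReal (poissonDualObjective q x t)) =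
    if ∀ k, 0 ≤ x k then ∑' k, ENNReal.ofReal (poissonRate (q k) (x k)) else ⊤
  split_ifs with hx
  · refine le_antisymm (iSup_le (ofReal_poissonDualObjective_le hq hqs x hx)) ?_
    rw [ENNReal.tsum_eq_iSup_sum]
    exact iSup_le (sum_ofReal_poissonRate_le_iSup hq hx)
  · obtain ⟨k₀, hk₀⟩ := not_forall.mp hx
    exact iSup_ofReal_poissonDualObjective_eq_top (fun k => (hq k).le) (not_le.mp hk₀)
end

section
/- Let μ > 0, a > 0, and define H(x) = −μ D(x) + (a/2) D(x)² on ℓ¹(ℝ₊), where D(x) = Σ_k k x_k. Then the lower semicontinuous regularisation of H (the greatest lower semicontinuous function ≤ H) is H_{lsc}(x) = H(x) − (1/(2a)) (μ − a D(x))₊², i.e. H_{lsc}(x) = −μ D(x) + (a/2) D(x)² if D(x) ≥ μ/a, and H_{lsc}(x) = −μ²/(2a) if D(x) < μ/a. -/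
/-!
`D` is lower semicontinuous on `ℓ¹` as a sum of nonnegative continuous terms, and `HpmfLsc` is a
continuous nondecreasing function of `D`, hence lower semicontinuous; it lies below `H` because
`-μ²/(2a)` is the minimum of `d ↦ -μ d + (a/2) d²`, attained at `d = μ/a`.
For maximality, let `D(x) < μ/a` and `c = μ/a - D(x)`. Adding mass `c/(n+1)` at site `n+1` gives
nonnegative points at `ℓ¹` distance `c/(n+1)` from `x` whose density is exactly `μ/a`, where `H`
equals `-μ²/(2a)`; any lower semicontinuous minorant of `H` is therefore at most `-μ²/(2a)` at `x`.
-/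

open scoped ENNReal Classical

/-- Particle density `D(x) = ∑ₖ k x k ∈ [0,∞]`. -/
noncomputable def particleDensity (x : lp (fun _ : ℕ => ℝ) 1) : ℝ≥0∞ :=
  ∑' k : ℕ, (k : ℝ≥0∞) * ENNReal.ofReal (x k)

/-- The PMF Hamiltonian `H(x) = −μ D(x) + (a/2) D(x)²`, with value `+∞` when `D(x) = ∞`. -/
noncomputable def Hpmf (μ a : ℝ) (x : lp (fun _ : ℕ => ℝ) 1) : EReal :=
  if particleDensity x = ⊤ then ⊤
  else ((-μ * (particleDensity x).toReal + a / 2 * (particleDensity x).toReal ^ 2 : ℝ) : EReal)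

/-- The claimed lower semicontinuous regularisation of `Hpmf`:
`−μ²/(2a)` when `D(x) < μ/a`, and `Hpmf` itself when `D(x) ≥ μ/a`. -/
noncomputable def HpmfLsc (μ a : ℝ) (x : lp (fun _ : ℕ => ℝ) 1) : EReal :=
  if particleDensity x < ENNReal.ofReal (μ / a) then ((-(μ ^ 2) / (2 * a) : ℝ) : EReal)
  else Hpmf μ a x

open Filter Topology

local notation "ℓ¹" => lp (fun _ : ℕ => ℝ) 1

theorem LowerSemicontinuousWithinAt.le_of_tendsto {α γ ι : Type*} [TopologicalSpace α]
    [LinearOrder γ] {f : α → γ} {s : Set α} {x : α} {l : Filter ι} [l.NeBot] {y : ι → α}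
    {b : γ} (hf : LowerSemicontinuousWithinAt f s x) (hy : Tendsto y l (𝓝 x))
    (hys : ∀ i, y i ∈ s) (hb : ∀ i, f (y i) ≤ b) : f x ≤ b := by
  by_contra! hlt
  have hy' : Tendsto y l (𝓝[s] x) := tendsto_nhdsWithin_iff.2 ⟨hy, .of_forall hys⟩
  obtain ⟨i, hi⟩ := (hy'.eventually (hf b hlt)).exists
  exact (hi.trans_le (hb i)).false

theorem lowerSemicontinuous_particleDensity : LowerSemicontinuous particleDensity :=
  lowerSemicontinuous_tsum fun k => Continuous.lowerSemicontinuous <|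
    (ENNReal.continuous_const_mul (by simp)).comp
      (ENNReal.continuous_ofReal.comp (lp.lipschitzWith_one_eval 1 k).continuous)

theorem particleDensity_add_single {x : ℓ¹} (hx : ∀ k, 0 ≤ x k) (n : ℕ) {c : ℝ} (hc : 0 ≤ c) :
    particleDensity (x + lp.single 1 n c) = particleDensity x + n * ENNReal.ofReal c := by
  have hterm : ∀ k : ℕ, (k : ℝ≥0∞) * ENNReal.ofReal ((x + lp.single 1 n c : ℓ¹) k)
      = k * ENNReal.ofReal (x k) + k * ENNReal.ofReal ((Pi.single n c : ℕ → ℝ) k) := by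
    intro k
    rw [lp.coeFn_add, Pi.add_apply, lp.single_apply,
      ENNReal.ofReal_add (hx k) (by rcases eq_or_ne k n with rfl | h <;> simp [*]), mul_add]
  rw [particleDensity, particleDensity, tsum_congr hterm, ENNReal.tsum_add]
  congr 1
  rw [tsum_eq_single n fun k hk => by simp [hk], Pi.single_eq_same]

theorem tendsto_add_single_div_succ (x : ℓ¹) (c : ℝ) :
    Tendsto (fun n : ℕ => x + lp.single 1 (n + 1) (c / (n + 1))) atTop (𝓝 x) := by
  rw [tendsto_iff_norm_sub_tendsto_zero]
  simp only [add_sub_cancel_left, lp.norm_single one_pos, norm_div]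
  have hnorm (n : ℕ) : ‖((n : ℝ) + 1)‖ = ((n + 1 : ℕ) : ℝ) := by
    rw [Real.norm_of_nonneg (by positivity), Nat.cast_succ]
  simp only [hnorm]
  exact (tendsto_const_div_atTop_nhds_zero_nat ‖c‖).comp (tendsto_add_atTop_nat 1)

theorem add_single_nonneg {x : ℓ¹} (hx : ∀ k, 0 ≤ x k) (n : ℕ) {c : ℝ} (hc : 0 ≤ c) (k : ℕ) :
    0 ≤ (x + lp.single 1 n c : ℓ¹) k := by
  rw [lp.coeFn_add, Pi.add_apply, lp.single_apply]
  exact add_nonneg (hx k) (by rcases eq_or_ne k n with rfl | h <;> simp [*])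

theorem particleDensity_add_single_div_succ {x : ℓ¹} (hx : ∀ k, 0 ≤ x k) (n : ℕ) {c : ℝ}
    (hc : 0 ≤ c) :
    particleDensity (x + lp.single 1 (n + 1) (c / (n + 1))) =
      particleDensity x + ENNReal.ofReal c := by
  rw [particleDensity_add_single hx _ (by positivity), ← ENNReal.ofReal_natCast,
    ← ENNReal.ofReal_mul (by positivity), Nat.cast_succ, mul_div_cancel₀ _ (by positivity)]

theorem EReal.continuous_add_coe (c : ℝ) : Continuous fun e : EReal => e + c :=
  continuous_iff_continuousAt.2 fun _ =>
    (EReal.continuousAt_add (Or.inr (EReal.coe_ne_bot c)) (Or.inr (EReal.coe_ne_top c))).comp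
      (continuous_id.prodMk continuous_const).continuousAt

section Hamiltonian

variable {μ a : ℝ}

theorem Hpmf_eq_of_particleDensity_eq_ofReal {x : ℓ¹} {t : ℝ} (ht : 0 ≤ t)
    (hx : particleDensity x = ENNReal.ofReal t) :
    Hpmf μ a x = ((-μ * t + a / 2 * t ^ 2 : ℝ) : EReal) := by
  rw [Hpmf, if_neg (by simp [hx]), hx, ENNReal.toReal_ofReal ht]

theorem neg_sq_div_le_Hpmf (ha : 0 < a) (x : ℓ¹) :
    ((-(μ ^ 2) / (2 * a) : ℝ) : EReal) ≤ Hpmf μ a x := by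
  unfold Hpmf
  split_ifs
  · exact le_top
  · rw [EReal.coe_le_coe_iff, div_le_iff₀ (by positivity)]
    nlinarith [sq_nonneg (a * (particleDensity x).toReal - μ)]

theorem HpmfLsc_le_Hpmf (ha : 0 < a) (x : ℓ¹) : HpmfLsc μ a x ≤ Hpmf μ a x := by
  unfold HpmfLsc
  split_ifs
  · exact neg_sq_div_le_Hpmf ha x
  · exact le_rfl

/-- `d ↦ (a/2) (d - μ/a)₊² - μ²/(2a)`; the positive part is the truncated subtraction of `ℝ≥0∞`. -/
noncomputable def HpmfLscProfile (μ a : ℝ) (d : ℝ≥0∞) : EReal :=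
  ((ENNReal.ofReal (a / 2) * (d - ENNReal.ofReal (μ / a)) ^ 2 : ℝ≥0∞) : EReal) +
    ((-(μ ^ 2) / (2 * a) : ℝ) : EReal)

theorem monotone_HpmfLscProfile : Monotone (HpmfLscProfile μ a) := fun _ _ h =>
  add_le_add_left (EReal.coe_ennreal_le_coe_ennreal_iff.2 <|
    mul_le_mul_right (pow_le_pow_left' (tsub_le_tsub_right h _) 2) _) _

theorem continuous_HpmfLscProfile : Continuous (HpmfLscProfile μ a) :=
  (EReal.continuous_add_coe _).comp <| continuous_coe_ennreal_ereal.comp <|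
    (ENNReal.continuous_const_mul (by simp)).comp <|
      (ENNReal.continuous_pow 2).comp (ENNReal.continuous_sub_right _)

theorem HpmfLsc_eq_HpmfLscProfile (hμ : 0 ≤ μ) (ha : 0 < a) (x : ℓ¹) :
    HpmfLsc μ a x = HpmfLscProfile μ a (particleDensity x) := by
  unfold HpmfLsc HpmfLscProfile
  split_ifs with hlt
  · simp [tsub_eq_zero_of_le hlt.le]
  by_cases htop : particleDensity x = ⊤
  · rw [Hpmf, if_pos htop, htop, ENNReal.top_sub ENNReal.ofReal_ne_top,
      ENNReal.top_pow two_ne_zero, ENNReal.mul_top (ENNReal.ofReal_pos.2 (by positivity)).ne',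
      EReal.coe_ennreal_top,
      EReal.top_add_coe]
  obtain ⟨t, ht, hdt⟩ : ∃ t, 0 ≤ t ∧ particleDensity x = ENNReal.ofReal t :=
    ⟨_, ENNReal.toReal_nonneg, (ENNReal.ofReal_toReal htop).symm⟩
  have hle : μ / a ≤ t := by rwa [not_lt, hdt, ENNReal.ofReal_le_ofReal_iff ht] at hlt
  rw [Hpmf_eq_of_particleDensity_eq_ofReal ht hdt, hdt,
    ← ENNReal.ofReal_sub t (by positivity), ← ENNReal.ofReal_pow (by linarith),
    ← ENNReal.ofReal_mul (by linarith), EReal.coe_ennreal_ofReal,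
    max_eq_left (by positivity), ← EReal.coe_add, EReal.coe_eq_coe_iff]
  field_simp
  ring

theorem lowerSemicontinuous_HpmfLsc (hμ : 0 ≤ μ) (ha : 0 < a) :
    LowerSemicontinuous (HpmfLsc μ a) := by
  rw [funext (HpmfLsc_eq_HpmfLscProfile hμ ha)]
  exact continuous_HpmfLscProfile.comp_lowerSemicontinuous lowerSemicontinuous_particleDensity
    monotone_HpmfLscProfile

theorem Hpmf_add_single_div_succ (hμ : 0 ≤ μ) (ha : 0 < a) {x : ℓ¹} (hx : ∀ k, 0 ≤ x k)
    (hD : particleDensity x ≤ ENNReal.ofReal (μ / a)) (n : ℕ) :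
    Hpmf μ a (x + lp.single 1 (n + 1) ((μ / a - (particleDensity x).toReal) / (n + 1))) =
      ((-(μ ^ 2) / (2 * a) : ℝ) : EReal) := by
  have hma : 0 ≤ μ / a := by positivity
  have hle : (particleDensity x).toReal ≤ μ / a := ENNReal.toReal_le_of_le_ofReal hma hD
  rw [Hpmf_eq_of_particleDensity_eq_ofReal hma, EReal.coe_eq_coe_iff]
  · field_simp
    ring
  rw [particleDensity_add_single_div_succ hx n (by linarith)]
  nth_rw 1 [← ENNReal.ofReal_toReal (ne_top_of_le_ne_top ENNReal.ofReal_ne_top hD)]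
  rw [← ENNReal.ofReal_add ENNReal.toReal_nonneg (by linarith), add_sub_cancel]

theorem le_HpmfLsc_of_lowerSemicontinuousOn (hμ : 0 ≤ μ) (ha : 0 < a) {G : ℓ¹ → EReal}
    (hG : LowerSemicontinuousOn G {x | ∀ k, 0 ≤ x k})
    (hGH : ∀ x : ℓ¹, (∀ k, 0 ≤ x k) → G x ≤ Hpmf μ a x) {x : ℓ¹} (hx : ∀ k, 0 ≤ x k) :
    G x ≤ HpmfLsc μ a x := by
  unfold HpmfLsc
  split_ifs with hD
  · set c := μ / a - (particleDensity x).toReal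
    have hc : 0 ≤ c := sub_nonneg.2 (ENNReal.toReal_le_of_le_ofReal (by positivity) hD.le)
    have hy : ∀ n : ℕ, ∀ k, 0 ≤ (x + lp.single 1 (n + 1) (c / (n + 1)) : ℓ¹) k :=
      fun n => add_single_nonneg hx _ (by positivity)
    exact LowerSemicontinuousWithinAt.le_of_tendsto (hG x hx) (tendsto_add_single_div_succ x c)
      hy fun n => (hGH _ (hy n)).trans (Hpmf_add_single_div_succ hμ ha hx hD.le n).le
  · exact hGH x hx

end Hamiltonian

/-- For `μ > 0`, `a > 0`, the function `HpmfLsc μ a` is the lower semicontinuous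
regularisation (greatest lsc minorant) of `Hpmf μ a` on the nonnegative cone of `ℓ¹(ℝ)`. -/
theorem stmt9 (μ a : ℝ) (hμ : 0 < μ) (ha : 0 < a) :
    LowerSemicontinuousOn (HpmfLsc μ a) {x : lp (fun _ : ℕ => ℝ) 1 | ∀ k, 0 ≤ x k} ∧
    (∀ x : lp (fun _ : ℕ => ℝ) 1, (∀ k, 0 ≤ x k) → HpmfLsc μ a x ≤ Hpmf μ a x) ∧
    (∀ G : lp (fun _ : ℕ => ℝ) 1 → EReal,
      LowerSemicontinuousOn G {x : lp (fun _ : ℕ => ℝ) 1 | ∀ k, 0 ≤ x k} →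
      (∀ x : lp (fun _ : ℕ => ℝ) 1, (∀ k, 0 ≤ x k) → G x ≤ Hpmf μ a x) →
      ∀ x : lp (fun _ : ℕ => ℝ) 1, (∀ k, 0 ≤ x k) → G x ≤ HpmfLsc μ a x) :=
  ⟨(lowerSemicontinuous_HpmfLsc hμ.le ha).lowerSemicontinuousOn _,
    fun x _ => HpmfLsc_le_Hpmf ha x,
    fun _ hG hGH _ hx => le_HpmfLsc_of_lowerSemicontinuousOn hμ.le ha hG hGH hx⟩
end

section
/- Let a > 0, β > 0, μ ∈ ℝ, and q_k > 0 with Σ_k k q_k e^{βεk} < ∞ for all ε < 0 and Σ_k k q_k ∈ (0,∞]. Define h(δ) = Σ_{k≥1} k q_k exp(βk (μ − aδ)₋) for δ ≥ 0, where (z)₋ = min(z, 0). Then h is non-increasing on [0,∞), lim_{δ→∞} h(δ) = 0, and if Σ_k k q_k = ∞ in the case μ ≥ 0, or in all other cases, there exists a unique δ* > 0 with h(δ*) = δ* whenever lim_{δ→0⁺} h(δ) > 0. -/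
open scoped ENNReal
open Filter Set Topology

/-!
Writing `G(s) = ∑ₖ k q_k e^{βks}`, the function in question is `h = G ∘ φ` with
`φ δ = min (μ - aδ) 0`. The series `G` is monotone and continuous on `(-∞, 0]` as an
`[0,∞]`-valued function: at `s < 0` by uniform convergence (the terms are dominated by those
at a point between `s` and `0`), at `0` because a monotone lower semicontinuous function is
left-continuous. Moreover `G(s) ≤ e^{β(s+1)} G(-1)` for `s ≤ -1`, so `G → 0` at `-∞`.
Hence `h` is continuous, antitone, positive at `0` and tends to `0`; the intermediate value
theorem gives a crossing with `δ ↦ δ` on `(0,∞)`, unique because `h` is antitone.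
-/

theorem AntitoneOn.eq_of_eq_of_strictMonoOn {α β : Type*} [LinearOrder α] [Preorder β]
    {f g : α → β} {s : Set α} (hf : AntitoneOn f s) (hg : StrictMonoOn g s) {x y : α}
    (hx : x ∈ s) (hy : y ∈ s) (hfx : f x = g x) (hfy : f y = g y) : x = y := by
  rcases lt_trichotomy x y with h | h | h
  · exact absurd (hfy ▸ hfx ▸ hf hx hy h.le) (hg hx hy h).not_ge
  · exact h
  · exact absurd (hfx ▸ hfy ▸ hf hy hx h.le) (hg hy hx h).not_ge

theorem Monotone.continuousWithinAt_Iic_of_lowerSemicontinuousAt {α β : Type*}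
    [TopologicalSpace α] [Preorder α] [LinearOrder β] [TopologicalSpace β] [OrderTopology β]
    {f : α → β} (hf : Monotone f) {x : α} (hlsc : LowerSemicontinuousAt f x) :
    ContinuousWithinAt f (Iic x) x :=
  tendsto_order.2 ⟨fun _ hb => (hlsc _ hb).filter_mono nhdsWithin_le_nhds,
    fun _ hb => eventually_nhdsWithin_of_forall fun _ hy => (hf hy).trans_lt hb⟩

namespace PMFSelfConsistency

noncomputable def tiltedTerm (β : ℝ) (q : ℕ → ℝ) (s : ℝ) (k : ℕ) : ℝ :=
  k * q k * Real.exp (β * k * s)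

noncomputable def tiltedSum (β : ℝ) (q : ℕ → ℝ) (s : ℝ) : ℝ≥0∞ :=
  ∑' k : ℕ, ENNReal.ofReal (tiltedTerm β q s k)

variable {β : ℝ} {q : ℕ → ℝ}

theorem tiltedTerm_nonneg (hq : ∀ k, 0 ≤ q k) (s : ℝ) (k : ℕ) : 0 ≤ tiltedTerm β q s k :=
  mul_nonneg (mul_nonneg k.cast_nonneg (hq k)) (Real.exp_nonneg _)

theorem continuous_tiltedTerm (k : ℕ) : Continuous fun s => tiltedTerm β q s k := by
  unfold tiltedTerm; fun_prop

theorem tiltedTerm_mono (hβ : 0 ≤ β) (hq : ∀ k, 0 ≤ q k) (k : ℕ) :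
    Monotone fun s => tiltedTerm β q s k := fun _ _ hst =>
  mul_le_mul_of_nonneg_left (Real.exp_le_exp.2 (by gcongr)) (mul_nonneg k.cast_nonneg (hq k))

theorem tiltedSum_mono (hβ : 0 ≤ β) (hq : ∀ k, 0 ≤ q k) : Monotone (tiltedSum β q) :=
  fun _ _ hst => ENNReal.tsum_le_tsum fun k =>
    ENNReal.ofReal_le_ofReal (tiltedTerm_mono hβ hq k hst)

theorem tiltedSum_pos (hq₁ : 0 < q 1) (s : ℝ) : 0 < tiltedSum β q s := by
  refine lt_of_lt_of_le ?_ (ENNReal.le_tsum 1)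
  simp only [tiltedTerm, Nat.cast_one, one_mul, ENNReal.ofReal_pos]
  positivity

theorem tiltedSum_eq_ofReal_tsum (hq : ∀ k, 0 ≤ q k) {s : ℝ}
    (hs : Summable (tiltedTerm β q s)) :
    tiltedSum β q s = ENNReal.ofReal (∑' k, tiltedTerm β q s k) :=
  (ENNReal.ofReal_tsum_of_nonneg (tiltedTerm_nonneg hq s) hs).symm

theorem lowerSemicontinuous_tiltedSum : LowerSemicontinuous (tiltedSum β q) :=
  lowerSemicontinuous_tsum fun k =>
    (ENNReal.continuous_ofReal.comp (continuous_tiltedTerm k)).lowerSemicontinuous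

theorem tiltedSum_le_exp_mul (hβ : 0 ≤ β) (hq : ∀ k, 0 ≤ q k) {s : ℝ} (hs : s ≤ -1) :
    tiltedSum β q s ≤ ENNReal.ofReal (Real.exp (β * (s + 1))) * tiltedSum β q (-1) := by
  rw [tiltedSum, tiltedSum, ← ENNReal.tsum_mul_left]
  refine ENNReal.tsum_le_tsum fun k => ?_
  rw [← ENNReal.ofReal_mul (Real.exp_nonneg _)]
  refine ENNReal.ofReal_le_ofReal ?_
  rcases k.eq_zero_or_pos with rfl | hk
  · simp [tiltedTerm]
  have hk : (1 : ℝ) ≤ k := by exact_mod_cast hk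
  -- `βks ≤ β(s+1) - βk` amounts to `β(s+1)(k-1) ≤ 0`
  have hexp : β * k * s ≤ β * (s + 1) + β * k * (-1) := by
    nlinarith [mul_nonneg (mul_nonneg hβ (sub_nonneg.2 hk)) (by linarith : (0 : ℝ) ≤ -(s + 1))]
  calc tiltedTerm β q s k ≤ k * q k * Real.exp (β * (s + 1) + β * k * (-1)) :=
        mul_le_mul_of_nonneg_left (Real.exp_le_exp.2 hexp) (mul_nonneg k.cast_nonneg (hq k))
    _ = Real.exp (β * (s + 1)) * tiltedTerm β q (-1) k := by
        rw [Real.exp_add, tiltedTerm]; ring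

section Summable

variable (hsum : ∀ s < 0, Summable (tiltedTerm β q s))
include hsum

theorem continuousAt_tiltedSum (hβ : 0 ≤ β) (hq : ∀ k, 0 ≤ q k) {s : ℝ} (hs : s < 0) :
    ContinuousAt (tiltedSum β q) s := by
  obtain ⟨c, hsc, hc⟩ := exists_between hs
  have hreal : ContinuousOn (fun s => ∑' k, tiltedTerm β q s k) (Iic c) :=
    continuousOn_tsum (fun k => (continuous_tiltedTerm k).continuousOn) (hsum c hc)
      fun k s' hs' => by
        rw [Real.norm_of_nonneg (tiltedTerm_nonneg hq s' k)]
        exact tiltedTerm_mono hβ hq k hs'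
  have heq : (fun s => ENNReal.ofReal (∑' k, tiltedTerm β q s k)) =ᶠ[𝓝 s] tiltedSum β q :=
    eventually_of_mem (Iic_mem_nhds hsc) fun s' hs' =>
      (tiltedSum_eq_ofReal_tsum hq (hsum s' (lt_of_le_of_lt hs' hc))).symm
  exact ((ENNReal.continuous_ofReal.continuousAt.comp
    (hreal.continuousAt (Iic_mem_nhds hsc)))).congr heq

theorem continuousOn_tiltedSum (hβ : 0 ≤ β) (hq : ∀ k, 0 ≤ q k) :
    ContinuousOn (tiltedSum β q) (Iic 0) := by
  intro s hs
  rcases (mem_Iic.1 hs).lt_or_eq with hs | rfl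
  · exact (continuousAt_tiltedSum hsum hβ hq hs).continuousWithinAt
  · exact (tiltedSum_mono hβ hq).continuousWithinAt_Iic_of_lowerSemicontinuousAt
      (lowerSemicontinuous_tiltedSum 0)

theorem tendsto_tiltedSum_atBot (hβ : 0 < β) (hq : ∀ k, 0 ≤ q k) :
    Tendsto (tiltedSum β q) atBot (𝓝 0) := by
  have hfin : tiltedSum β q (-1) ≠ ∞ := by
    rw [tiltedSum_eq_ofReal_tsum hq (hsum (-1) (by norm_num))]
    exact ENNReal.ofReal_ne_top
  have hexp : Tendsto (fun s => Real.exp (β * (s + 1))) atBot (𝓝 0) :=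
    Real.tendsto_exp_atBot.comp
      ((tendsto_atBot_add_const_right _ 1 tendsto_id).const_mul_atBot hβ)
  have hbound : Tendsto (fun s => ENNReal.ofReal (Real.exp (β * (s + 1))) * tiltedSum β q (-1))
      atBot (𝓝 0) := by
    simpa using ENNReal.Tendsto.mul_const (ENNReal.tendsto_ofReal hexp) (Or.inr hfin)
  refine tendsto_of_tendsto_of_tendsto_of_le_of_le' tendsto_const_nhds hbound
    (Eventually.of_forall fun _ => zero_le) ?_
  filter_upwards [eventually_le_atBot (-1)] with s hs
  exact tiltedSum_le_exp_mul hβ.le hq hs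

end Summable

theorem existsUnique_pos_eq_ofReal {f : ℝ → ℝ≥0∞} (hf : Continuous f) (hanti : Antitone f)
    (h0 : 0 < f 0) (htop : Tendsto f atTop (𝓝 0)) :
    ∃! δ : ℝ, 0 < δ ∧ f δ = ENNReal.ofReal δ := by
  have hlow : ∀ᶠ δ in 𝓝[>] 0, ENNReal.ofReal δ ≤ f δ := by
    have h := (ENNReal.continuous_ofReal.tendsto 0).eventually_lt (hf.tendsto 0)
      (by simpa using h0)
    exact (h.filter_mono nhdsWithin_le_nhds).mono fun _ => le_of_lt
  have hhigh : ∀ᶠ δ in atTop, f δ ≤ ENNReal.ofReal δ :=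
    (htop.eventually_lt ENNReal.tendsto_ofReal_atTop (by simp)).mono fun _ => le_of_lt
  obtain ⟨x, hxf, hx⟩ := (hlow.and self_mem_nhdsWithin).exists
  obtain ⟨y, hyf, hy⟩ := (hhigh.and (eventually_gt_atTop 0)).exists
  obtain ⟨δ, hδ, hfix⟩ := isPreconnected_Ioi.intermediate_value₂ hx hy
    ENNReal.continuous_ofReal.continuousOn hf.continuousOn hxf hyf
  refine ⟨δ, ⟨hδ, hfix.symm⟩, fun δ' ⟨hδ', hfix'⟩ => ?_⟩
  refine (hanti.antitoneOn (Ioi 0)).eq_of_eq_of_strictMonoOn ?_ hδ' hδ hfix' hfix.symm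
  exact fun u hu v _ huv => (ENNReal.ofReal_lt_ofReal_iff (hu.trans huv)).2 huv

end PMFSelfConsistency

open PMFSelfConsistency in
theorem stmt16_general (a β μ : ℝ) (ha : 0 < a) (hβ : 0 < β) (q : ℕ → ℝ) (hq : ∀ k, 0 < q k)
    (hsummable : ∀ ε : ℝ, ε < 0 →
      Summable (fun k : ℕ => (k : ℝ) * q k * Real.exp (β * ε * (k : ℝ)))) :
    AntitoneOn (fun δ : ℝ =>
        ∑' k : ℕ, ENNReal.ofReal ((k : ℝ) * q k * Real.exp (β * (k : ℝ) * min (μ - a * δ) 0)))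
      (Set.Ici 0) ∧
    Tendsto (fun δ : ℝ =>
        ∑' k : ℕ, ENNReal.ofReal ((k : ℝ) * q k * Real.exp (β * (k : ℝ) * min (μ - a * δ) 0)))
      atTop (nhds 0) ∧
    ((0 < ⨆ δ ∈ Set.Ioi (0 : ℝ),
        ∑' k : ℕ, ENNReal.ofReal ((k : ℝ) * q k * Real.exp (β * (k : ℝ) * min (μ - a * δ) 0))) →
      ∃! δ : ℝ, 0 < δ ∧
        (∑' k : ℕ, ENNReal.ofReal ((k : ℝ) * q k * Real.exp (β * (k : ℝ) * min (μ - a * δ) 0)))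
          = ENNReal.ofReal δ) := by
  have hq' : ∀ k, 0 ≤ q k := fun k => (hq k).le
  have hsum : ∀ s < 0, Summable (tiltedTerm β q s) := fun s hs =>
    (hsummable s hs).congr fun k => by rw [tiltedTerm, mul_right_comm β]
  set φ : ℝ → ℝ := fun δ => min (μ - a * δ) 0
  have hφ_anti : Antitone φ := fun x y hxy => min_le_min_right 0 (by nlinarith)
  have hφ_lim : Tendsto φ atTop atBot :=
    tendsto_atBot_mono (fun δ => min_le_left _ _)
      (tendsto_atBot_add_const_left _ μ (tendsto_neg_atTop_atBot.comp
        (tendsto_id.const_mul_atTop ha)))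
  have hanti : Antitone (tiltedSum β q ∘ φ) := (tiltedSum_mono hβ.le hq').comp_antitone hφ_anti
  have hlim : Tendsto (tiltedSum β q ∘ φ) atTop (𝓝 0) :=
    (tendsto_tiltedSum_atBot hsum hβ hq').comp hφ_lim
  have hcont : Continuous (tiltedSum β q ∘ φ) :=
    (continuousOn_tiltedSum hsum hβ.le hq').comp_continuous (by fun_prop)
      fun δ => mem_Iic.2 (min_le_right _ _)
  exact ⟨hanti.antitoneOn _, hlim,
    fun _ => existsUnique_pos_eq_ofReal hcont hanti (tiltedSum_pos (hq 1) _) hlim⟩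

/-- The PMF self-consistency function
`h(δ) = ∑ₖ k q_k exp(βk (μ − aδ)₋)` (valued in `[0,∞]`) is non-increasing on `[0,∞)`,
tends to `0` as `δ → ∞`, and, whenever its limit from the right at `0`
(equal to `⨆_{δ>0} h δ` by monotonicity) is positive, has a unique fixed point `δ* > 0`. -/
theorem stmt16 (a β μ : ℝ) (ha : 0 < a) (hβ : 0 < β) (q : ℕ → ℝ) (hq : ∀ k, 0 < q k)
    (hsummable : ∀ ε : ℝ, ε < 0 →
      Summable (fun k : ℕ => (k : ℝ) * q k * Real.exp (β * ε * (k : ℝ))))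
    (hpos : 0 < ∑' k : ℕ, ENNReal.ofReal ((k : ℝ) * q k)) :
    AntitoneOn (fun δ : ℝ =>
        ∑' k : ℕ, ENNReal.ofReal ((k : ℝ) * q k * Real.exp (β * (k : ℝ) * min (μ - a * δ) 0)))
      (Set.Ici 0) ∧
    Tendsto (fun δ : ℝ =>
        ∑' k : ℕ, ENNReal.ofReal ((k : ℝ) * q k * Real.exp (β * (k : ℝ) * min (μ - a * δ) 0)))
      atTop (nhds 0) ∧
    ((0 < ⨆ δ ∈ Set.Ioi (0 : ℝ),
        ∑' k : ℕ, ENNReal.ofReal ((k : ℝ) * q k * Real.exp (β * (k : ℝ) * min (μ - a * δ) 0))) →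
      ∃! δ : ℝ, 0 < δ ∧
        (∑' k : ℕ, ENNReal.ofReal ((k : ℝ) * q k * Real.exp (β * (k : ℝ) * min (μ - a * δ) 0)))
          = ENNReal.ofReal δ) :=
  stmt16_general a β μ ha hβ q hq hsummable
end
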